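/- Fix p ∈ (0,1). Define Λ(λ) = ln(1 - p² + p²e^λ) for λ < 0 and Λ(λ) = ln((1-p)² + p(2-p)e^λ) for λ ≥ 0. Then its Fenchel–Legendre transform satisfies Λ*(x) = I_{p²}(x) if x < p², Λ*(x) = 0 if p² ≤ x ≤ p(2-p), and Λ*(x) = I_{p(2-p)}(x) if x > p(2-p), where I_t(x) = x·ln(x/t) + (1-x)·ln((1-x)/(1-t)) for x ∈ [0,1] and I_t(x) = ∞ otherwise. -/
import Mathlib


open Real

noncomputable def rateI (t : ℝ) (x : ℝ) : EReal :=
  if x ∈ Set.Icc (0 : ℝ) 1 then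
    ((x * Real.log (x / t) + (1 - x) * Real.log ((1 - x) / (1 - t)) : ℝ) : EReal)
  else ⊤

noncomputable def LambdaPW (p : ℝ) (l : ℝ) : ℝ :=
  if l < 0 then Real.log (1 - p ^ 2 + p ^ 2 * exp l)
  else Real.log ((1 - p) ^ 2 + p * (2 - p) * exp l)


lemma pos_arg {t : ℝ} (ht0 : 0 < t) (ht1 : t < 1) (l : ℝ) : 0 < 1 - t + t * Real.exp l := by
  have := Real.exp_pos l
  nlinarith

lemma amgm_bound {t x : ℝ} (ht0 : 0 < t) (ht1 : t < 1) (hx0 : 0 ≤ x) (hx1 : x ≤ 1) (l : ℝ) :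
    l * x - Real.log (1 - t + t * Real.exp l) ≤
      x * Real.log (x / t) + (1 - x) * Real.log ((1 - x) / (1 - t)) := by
  have harg := pos_arg ht0 ht1 l
  rcases eq_or_lt_of_le hx0 with h0 | h0
  · subst h0
    have h1t : (0:ℝ) < 1 - t := by linarith
    simp only [mul_zero, zero_mul, zero_add, sub_zero, one_mul, zero_div, Real.log_zero,
      zero_sub, one_div]
    rw [Real.log_inv]
    have : Real.log (1 - t) ≤ Real.log (1 - t + t * Real.exp l) :=
      Real.log_le_log h1t (by nlinarith [Real.exp_pos l])
    linarith
  rcases eq_or_lt_of_le hx1 with h1 | h1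
  · subst h1
    have h1t : (0:ℝ) < 1 - t := by linarith
    simp only [mul_one, sub_self, zero_mul, add_zero, one_mul]
    have : Real.log (t * Real.exp l) ≤ Real.log (1 - t + t * Real.exp l) :=
      Real.log_le_log (by positivity) (by nlinarith [Real.exp_pos l])
    rw [Real.log_mul (ne_of_gt ht0) (Real.exp_ne_zero l), Real.log_exp] at this
    rw [Real.log_div one_ne_zero (ne_of_gt ht0), Real.log_one]
    linarith
  · -- 0 < x < 1
    have h1x : 0 < 1 - x := by linarith
    have h1t : 0 < 1 - t := by linarith
    have hp1 : 0 < (1 - t) / (1 - x) := by positivity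
    have hp2 : 0 < t * Real.exp l / x := by positivity
    have key := Real.geom_mean_le_arith_mean2_weighted (le_of_lt h1x) hx0 hp1.le hp2.le
      (by ring : (1 - x) + x = 1)
    have key2 : (1 - x) * Real.log ((1 - t) / (1 - x)) + x * Real.log (t * Real.exp l / x)
        ≤ Real.log (1 - t + t * Real.exp l) := by
      have hL : Real.log (((1 - t) / (1 - x)) ^ (1 - x) * (t * Real.exp l / x) ^ x)
          = (1 - x) * Real.log ((1 - t) / (1 - x)) + x * Real.log (t * Real.exp l / x) := by
        rw [Real.log_mul (by positivity) (by positivity), Real.log_rpow hp1, Real.log_rpow hp2]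
      have harith : (1 - x) * ((1 - t) / (1 - x)) + x * (t * Real.exp l / x) = 1 - t + t * Real.exp l := by
        field_simp
      rw [← hL]
      apply Real.log_le_log (by positivity)
      calc _ ≤ (1 - x) * ((1 - t) / (1 - x)) + x * (t * Real.exp l / x) := key
        _ = _ := harith
    have e1 : Real.log (t * Real.exp l / x) = Real.log t + l - Real.log x := by
      rw [Real.log_div (by positivity) (ne_of_gt h0), Real.log_mul (ne_of_gt ht0) (Real.exp_ne_zero l), Real.log_exp]
    have e2 : Real.log (x / t) = Real.log x - Real.log t := Real.log_div (ne_of_gt h0) (ne_of_gt ht0)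
    have e3 : Real.log ((1-x)/(1-t)) = Real.log (1-x) - Real.log (1-t) := Real.log_div (ne_of_gt h1x) (ne_of_gt h1t)
    have e4 : Real.log ((1-t)/(1-x)) = Real.log (1-t) - Real.log (1-x) := Real.log_div (ne_of_gt h1t) (ne_of_gt h1x)
    rw [e1, e4] at key2
    rw [e2, e3]
    nlinarith [key2]

lemma rate_nonneg {t x : ℝ} (ht0 : 0 < t) (ht1 : t < 1) (hx0 : 0 ≤ x) (hx1 : x ≤ 1) :
    0 ≤ x * Real.log (x / t) + (1 - x) * Real.log ((1 - x) / (1 - t)) := by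
  have := amgm_bound ht0 ht1 hx0 hx1 0
  simp only [Real.exp_zero, mul_one, zero_mul] at this
  rw [show 1 - t + t = (1:ℝ) by ring, Real.log_one] at this
  linarith

lemma log_ge_lin {t : ℝ} (ht0 : 0 < t) (ht1 : t < 1) (l : ℝ) :
    t * l ≤ Real.log (1 - t + t * Real.exp l) := by
  have := amgm_bound ht0 ht1 ht0.le ht1.le l
  rw [div_self (ne_of_gt ht0), div_self (by linarith : (1:ℝ) - t ≠ 0), Real.log_one] at this
  simp at this
  linarith [this]

lemma attained {t x : ℝ} (ht0 : 0 < t) (ht1 : t < 1) (hx0 : 0 < x) (hx1 : x < 1) :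
    (Real.log (x * (1 - t) / ((1 - x) * t))) * x
      - Real.log (1 - t + t * Real.exp (Real.log (x * (1 - t) / ((1 - x) * t))))
      = x * Real.log (x / t) + (1 - x) * Real.log ((1 - x) / (1 - t)) := by
  have h1x : (0:ℝ) < 1 - x := by linarith
  have h1t : (0:ℝ) < 1 - t := by linarith
  rw [Real.exp_log (by positivity)]
  have harg : 1 - t + t * (x * (1 - t) / ((1 - x) * t)) = (1 - t) / (1 - x) := by
    field_simp; ring
  rw [harg]
  rw [Real.log_div (by positivity) (by positivity), Real.log_mul (ne_of_gt hx0) (ne_of_gt h1t),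
    Real.log_mul (ne_of_gt h1x) (ne_of_gt ht0),
    Real.log_div (ne_of_gt h1t) (ne_of_gt h1x),
    Real.log_div (ne_of_gt hx0) (ne_of_gt ht0),
    Real.log_div (ne_of_gt h1x) (ne_of_gt h1t)]
  ring

lemma tend_bot {t : ℝ} (ht0 : 0 < t) (ht1 : t < 1) :
    Filter.Tendsto (fun l => -Real.log (1 - t + t * Real.exp l)) Filter.atBot
      (nhds (-Real.log (1 - t))) := by
  have h1 : Filter.Tendsto (fun l : ℝ => 1 - t + t * Real.exp l) Filter.atBot
      (nhds (1 - t + t * 0)) :=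
    tendsto_const_nhds.add (Real.tendsto_exp_atBot.const_mul t)
  rw [mul_zero, add_zero] at h1
  exact (((Real.continuousAt_log (by linarith)).tendsto).comp h1).neg

lemma tend_top {t : ℝ} (ht0 : 0 < t) (ht1 : t < 1) :
    Filter.Tendsto (fun l => l - Real.log (1 - t + t * Real.exp l)) Filter.atTop
      (nhds (-Real.log t)) := by
  have hrw : ∀ l : ℝ, l - Real.log (1 - t + t * Real.exp l)
      = -Real.log ((1 - t) * Real.exp (-l) + t) := by
    intro l
    have h1 : (1 - t) * Real.exp (-l) + t = (1 - t + t * Real.exp l) * Real.exp (-l) := by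
      rw [Real.exp_neg]
      field_simp [Real.exp_ne_zero]
    rw [h1, Real.log_mul (ne_of_gt (pos_arg ht0 ht1 l)) (Real.exp_ne_zero _), Real.log_exp]
    ring
  simp only [hrw]
  have h1 : Filter.Tendsto (fun l : ℝ => (1 - t) * Real.exp (-l) + t) Filter.atTop
      (nhds ((1 - t) * 0 + t)) :=
    ((Real.tendsto_exp_atBot.comp Filter.tendsto_neg_atTop_atBot).const_mul (1 - t)).add
      tendsto_const_nhds
  rw [mul_zero, zero_add] at h1
  exact (((Real.continuousAt_log (ne_of_gt ht0)).tendsto).comp h1).neg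

lemma ereal_isup_eq_top {f : ℝ → ℝ} (h : ∀ M : ℝ, ∃ l, M < f l) :
    (⨆ l : ℝ, ((f l : ℝ) : EReal)) = ⊤ := by
  rw [iSup_eq_top]
  intro c hc
  induction c using EReal.rec with
  | bot => exact ⟨0, EReal.bot_lt_coe _⟩
  | coe c => obtain ⟨l, hl⟩ := h c; exact ⟨l, by exact_mod_cast hl⟩
  | top => exact absurd hc (lt_irrefl _)

lemma ereal_le_isup_of_forall {f : ℝ → ℝ} {c : ℝ} (h : ∀ d : ℝ, d < c → ∃ l, d < f l) :
    ((c : ℝ) : EReal) ≤ ⨆ l : ℝ, ((f l : ℝ) : EReal) := by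
  refine le_of_forall_lt fun d hd => ?_
  rw [lt_iSup_iff]
  induction d using EReal.rec with
  | bot => exact ⟨0, EReal.bot_lt_coe _⟩
  | coe d =>
      obtain ⟨l, hl⟩ := h d (by exact_mod_cast hd)
      exact ⟨l, by exact_mod_cast hl⟩
  | top => exact absurd hd (not_top_lt)

lemma lower_from_tendsto {f : ℝ → ℝ} {c : ℝ} {F : Filter ℝ} [F.NeBot]
    (h : Filter.Tendsto f F (nhds c)) :
    ((c : ℝ) : EReal) ≤ ⨆ l : ℝ, ((f l : ℝ) : EReal) := by
  apply ereal_le_isup_of_forall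
  intro d hd
  exact (h.eventually (eventually_gt_nhds hd)).exists

theorem stmt_11 (p : ℝ) (hp : p ∈ Set.Ioo (0 : ℝ) 1) (x : ℝ) :
    (⨆ l : ℝ, ((l * x - LambdaPW p l : ℝ) : EReal)) =
      if x < p ^ 2 then rateI (p ^ 2) x
      else if x ≤ p * (2 - p) then 0
      else rateI (p * (2 - p)) x := by
  obtain ⟨hp0, hp1⟩ := hp
  have ha0 : 0 < p ^ 2 := by positivity
  have ha1 : p ^ 2 < 1 := by nlinarith
  have hb0 : 0 < p * (2 - p) := by nlinarith
  have hb1 : p * (2 - p) < 1 := by nlinarith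
  have hab : p ^ 2 < p * (2 - p) := by nlinarith
  have hΛa : ∀ l : ℝ, l < 0 →
      LambdaPW p l = Real.log (1 - p ^ 2 + p ^ 2 * Real.exp l) := by
    intro l h; simp only [LambdaPW, if_pos h]
  have hΛb : ∀ l : ℝ, ¬ l < 0 →
      LambdaPW p l = Real.log (1 - p * (2 - p) + p * (2 - p) * Real.exp l) := by
    intro l h; simp only [LambdaPW, if_neg h]; congr 1; ring
  by_cases hxa : x < p ^ 2
  · rw [if_pos hxa]
    rcases lt_or_ge x 0 with hx0 | hx0
    · -- x < 0 : sup is ⊤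
      have hmem : x ∉ Set.Icc (0 : ℝ) 1 := fun h => absurd h.1 (not_le.2 hx0)
      rw [rateI, if_neg hmem]
      apply ereal_isup_eq_top
      intro M
      set l : ℝ := min (-1) ((M + 1) / x) with hl
      have hlneg : l < 0 := lt_of_le_of_lt (min_le_left _ _) (by norm_num)
      refine ⟨l, ?_⟩
      rw [hΛa _ hlneg]
      have hlog : Real.log (1 - p ^ 2 + p ^ 2 * Real.exp l) ≤ 0 := by
        apply Real.log_nonpos
        · nlinarith [Real.exp_pos l]
        · nlinarith [Real.exp_le_one_iff.2 hlneg.le]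
      have hmul : (M + 1) / x * x ≤ l * x :=
        mul_le_mul_of_nonpos_right (min_le_right _ _) hx0.le
      rw [div_mul_cancel₀ _ (ne_of_lt hx0)] at hmul
      linarith
    rcases eq_or_lt_of_le hx0 with hx0' | hx0'
    · -- x = 0
      subst hx0'
      have hmem : (0 : ℝ) ∈ Set.Icc (0 : ℝ) 1 := by constructor <;> norm_num
      rw [rateI, if_pos hmem]
      have hval : (0 : ℝ) * Real.log (0 / p ^ 2) + (1 - 0) * Real.log ((1 - 0) / (1 - p ^ 2))
          = -Real.log (1 - p ^ 2) := by
        rw [zero_mul, zero_add, sub_zero, one_div, Real.log_inv, one_mul]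
      rw [hval]
      apply le_antisymm
      · apply iSup_le
        intro l
        rw [EReal.coe_le_coe_iff]
        rcases lt_or_ge l 0 with h | h
        · rw [hΛa l h]
          have := Real.log_le_log (by linarith) (by nlinarith [Real.exp_pos l] :
            1 - p ^ 2 ≤ 1 - p ^ 2 + p ^ 2 * Real.exp l)
          linarith
        · rw [hΛb l (not_lt.2 h)]
          have h1 : (0:ℝ) ≤ Real.log (1 - p * (2 - p) + p * (2 - p) * Real.exp l) := by
            apply Real.log_nonneg
            nlinarith [Real.one_le_exp h]
          have h2 : Real.log (1 - p ^ 2) ≤ 0 := Real.log_nonpos (by linarith) (by linarith)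
          linarith
      · apply lower_from_tendsto (F := Filter.atBot)
        have htend := (tend_bot ha0 ha1)
        apply htend.congr'
        filter_upwards [Filter.eventually_lt_atBot (0 : ℝ)] with l hl
        rw [hΛa l hl, mul_zero, zero_sub]
    · -- 0 < x < p^2
      have hx1 : x < 1 := by linarith
      have hmem : x ∈ Set.Icc (0 : ℝ) 1 := ⟨hx0'.le, hx1.le⟩
      rw [rateI, if_pos hmem]
      apply le_antisymm
      · apply iSup_le
        intro l
        rw [EReal.coe_le_coe_iff]
        rcases lt_or_ge l 0 with h | h
        · rw [hΛa l h]
          exact amgm_bound ha0 ha1 hx0'.le hx1.le l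
        · rw [hΛb l (not_lt.2 h)]
          have h1 := log_ge_lin hb0 hb1 l
          have h2 := rate_nonneg ha0 ha1 hx0'.le hx1.le
          nlinarith
      · set l₀ : ℝ := Real.log (x * (1 - p ^ 2) / ((1 - x) * p ^ 2)) with hl₀
        have hl₀neg : l₀ < 0 := by
          have hd : (0:ℝ) < (1 - x) * p ^ 2 := by nlinarith
          apply Real.log_neg (div_pos (by nlinarith) hd)
          rw [div_lt_one hd]
          nlinarith
        apply le_iSup_of_le l₀
        rw [EReal.coe_le_coe_iff, hΛa l₀ hl₀neg]
        exact (attained ha0 ha1 hx0' hx1).ge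
  · rw [if_neg hxa]
    push_neg at hxa
    by_cases hxb : x ≤ p * (2 - p)
    · -- p^2 ≤ x ≤ p(2-p) : sup is 0
      rw [if_pos hxb]
      apply le_antisymm
      · apply iSup_le
        intro l
        rw [← EReal.coe_zero, EReal.coe_le_coe_iff]
        rcases lt_or_ge l 0 with h | h
        · rw [hΛa l h]
          have h1 := log_ge_lin ha0 ha1 l
          nlinarith
        · rw [hΛb l (not_lt.2 h)]
          have h1 := log_ge_lin hb0 hb1 l
          nlinarith
      · apply le_iSup_of_le 0
        have h0 : LambdaPW p 0 = 0 := by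
          simp only [LambdaPW, lt_irrefl, if_false, Real.exp_zero, mul_one]
          rw [show (1 - p) ^ 2 + p * (2 - p) = (1:ℝ) by ring, Real.log_one]
        rw [h0]
        norm_num
    · -- x > p(2-p)
      push_neg at hxb
      rw [if_neg (not_le.2 hxb)]
      rcases lt_or_ge 1 x with hx1 | hx1
      · -- x > 1 : top
        have hmem : x ∉ Set.Icc (0 : ℝ) 1 := fun h => absurd h.2 (not_le.2 hx1)
        rw [rateI, if_neg hmem]
        apply ereal_isup_eq_top
        intro M
        set l : ℝ := max 1 ((M + 1) / (x - 1)) with hl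
        have hl1 : (1:ℝ) ≤ l := le_max_left _ _
        have hnl : ¬ l < 0 := not_lt.2 (by linarith)
        refine ⟨l, ?_⟩
        rw [hΛb l hnl]
        have hexp : (1:ℝ) ≤ Real.exp l := Real.one_le_exp (by linarith)
        have hlog : Real.log (1 - p * (2 - p) + p * (2 - p) * Real.exp l) ≤ l := by
          rw [Real.log_le_iff_le_exp (by nlinarith [Real.exp_pos l])]
          nlinarith
        have hmul : (M + 1) / (x - 1) * (x - 1) ≤ l * (x - 1) :=
          mul_le_mul_of_nonneg_right (le_max_right _ _) (by linarith)
        rw [div_mul_cancel₀ _ (by linarith : x - 1 ≠ 0)] at hmul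
        nlinarith
      rcases eq_or_lt_of_le hx1 with hx1' | hx1'
      · -- x = 1
        subst hx1'
        have hmem : (1 : ℝ) ∈ Set.Icc (0 : ℝ) 1 := by constructor <;> norm_num
        rw [rateI, if_pos hmem]
        have hval : (1 : ℝ) * Real.log (1 / (p * (2 - p)))
            + (1 - 1) * Real.log ((1 - 1) / (1 - p * (2 - p)))
            = -Real.log (p * (2 - p)) := by
          rw [one_div, Real.log_inv, one_mul, sub_self, zero_mul, add_zero]
        rw [hval]
        apply le_antisymm
        · apply iSup_le
          intro l
          rw [EReal.coe_le_coe_iff]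
          rcases lt_or_ge l 0 with h | h
          · rw [hΛa l h]
            have h1 := log_ge_lin ha0 ha1 l
            have h2 : Real.log (p * (2 - p)) ≤ 0 := Real.log_nonpos (by positivity) (by linarith)
            nlinarith
          · rw [hΛb l (not_lt.2 h)]
            have h1 : Real.log (p * (2 - p) * Real.exp l)
                ≤ Real.log (1 - p * (2 - p) + p * (2 - p) * Real.exp l) :=
              Real.log_le_log (by positivity) (by nlinarith)
            rw [Real.log_mul (by positivity) (Real.exp_ne_zero l), Real.log_exp] at h1
            linarith
        · apply lower_from_tendsto (F := Filter.atTop)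
          have htend := (tend_top hb0 hb1)
          apply htend.congr'
          filter_upwards [Filter.eventually_ge_atTop (0 : ℝ)] with l hl
          rw [hΛb l (not_lt.2 hl), mul_one]
      · -- p(2-p) < x < 1
        have hx0 : 0 < x := by linarith
        have hmem : x ∈ Set.Icc (0 : ℝ) 1 := ⟨hx0.le, hx1'.le⟩
        rw [rateI, if_pos hmem]
        apply le_antisymm
        · apply iSup_le
          intro l
          rw [EReal.coe_le_coe_iff]
          rcases lt_or_ge l 0 with h | h
          · rw [hΛa l h]
            have h1 := log_ge_lin ha0 ha1 l
            have h2 := rate_nonneg hb0 hb1 hx0.le hx1'.le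
            nlinarith
          · rw [hΛb l (not_lt.2 h)]
            exact amgm_bound hb0 hb1 hx0.le hx1'.le l
        · set l₀ : ℝ := Real.log (x * (1 - p * (2 - p)) / ((1 - x) * (p * (2 - p)))) with hl₀
          have hl₀pos : ¬ l₀ < 0 := by
            apply not_lt.2
            apply Real.log_nonneg
            rw [le_div_iff₀ (by nlinarith : (0:ℝ) < (1 - x) * (p * (2 - p)))]
            nlinarith
          apply le_iSup_of_le l₀
          rw [EReal.coe_le_coe_iff, hΛb l₀ hl₀pos]
          exact (attained hb0 hb1 hx0 hx1').ge
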